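/- arXiv:1806.09922 — 5 statements merged into one kernel-verified Lean document; each statement's English description precedes it below -/
import Mathlib

section
/- The Itoh–Abe discrete gradient is consistent: if f: ℝⁿ → ℝ is continuously differentiable, then ∇_d f(x,y) → ∇f(x) as y → x (along points y with yᵢ ≠ xᵢ for all i). -/
/-!
The two points compared in the `i`-th Itoh–Abe quotient differ only in coordinate `i`, by
`(x i - y i) • eᵢ`, and both tend to `x` as `y → x`. A `C¹` map is strictly differentiable, i.e.
`f a - f b = L (a - b) + o(‖a - b‖)` as `a` and `b` tend to `x` jointly, so dividing by
`x i - y i` leaves `L eᵢ` plus a vanishing error.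
-/

open Filter Topology Asymptotics

theorem HasStrictFDerivAt.tendsto_sub_div_of_sub_eq_smul {𝕜 E α : Type*}
    [NontriviallyNormedField 𝕜] [NormedAddCommGroup E] [NormedSpace 𝕜 E]
    {f : E → 𝕜} {L : E →L[𝕜] 𝕜} {x v : E} (hf : HasStrictFDerivAt f L x)
    {l : Filter α} {a b : α → E} {c : α → 𝕜}
    (ha : Tendsto a l (𝓝 x)) (hb : Tendsto b l (𝓝 x))
    (hab : ∀ y, a y - b y = c y • v) (hc : ∀ᶠ y in l, c y ≠ 0) :
    Tendsto (fun y => (f (a y) - f (b y)) / c y) l (𝓝 (L v)) := by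
  have hremainder : (fun y => f (a y) - f (b y) - L (a y - b y)) =o[l] c := by
    refine (hf.isLittleO.comp_tendsto (ha.prodMk_nhds hb)).trans_isBigO ?_
    refine isBigO_of_le' (c := ‖v‖) l fun y => ?_
    rw [Function.comp_apply, hab, norm_smul, mul_comm]
  have hquot : Tendsto (fun y => L v + (f (a y) - f (b y) - L (a y - b y)) / c y) l
      (𝓝 (L v)) := by
    simpa using tendsto_const_nhds.add hremainder.tendsto_div_nhds_zero
  refine hquot.congr' (hc.mono fun y hy => ?_)
  rw [hab, map_smul, smul_eq_mul]
  field_simp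
  ring

theorem tendsto_ite_nhds {ι : Type*} {π : ι → Type*} [∀ i, TopologicalSpace (π i)]
    (p : ι → Prop) [DecidablePred p] (x : ∀ i, π i) :
    Tendsto (fun y : ∀ i, π i => fun j => if p j then x j else y j) (𝓝 x) (𝓝 x) := by
  refine tendsto_pi_nhds.2 fun j => ?_
  by_cases hj : p j
  · simpa [hj] using tendsto_const_nhds
  · simpa [hj] using (continuous_apply j).tendsto x

theorem ite_le_sub_ite_lt {ι R : Type*} [LinearOrder ι] [Ring R] (x y : ι → R) (i : ι) :
    (fun j => if j ≤ i then x j else y j) - (fun j => if j < i then x j else y j) =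
      (x i - y i) • Pi.single i 1 := by
  funext j
  rcases lt_trichotomy j i with hji | rfl | hij
  · simp [hji.le, hji, hji.ne]
  · simp
  · simp [not_le.2 hij, not_lt.2 hij.le, hij.ne']

/-- Consistency of the Itoh–Abe discrete gradient: as `y → x` (along points with
`y i ≠ x i` for all `i`), the discrete gradient tends to the gradient of `f` at `x`. -/
theorem itoh_abe_consistency {n : ℕ} (f : (Fin n → ℝ) → ℝ) (hf : ContDiff ℝ 1 f)
    (x : Fin n → ℝ) :
    Filter.Tendsto
      (fun y : Fin n → ℝ => fun i : Fin n =>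
        (f (fun j => if j ≤ i then x j else y j) -
          f (fun j => if j < i then x j else y j)) / (x i - y i))
      (nhdsWithin x {y : Fin n → ℝ | ∀ i, y i ≠ x i})
      (nhds (fun i : Fin n => fderiv ℝ f x (Pi.single i 1))) := by
  refine tendsto_pi_nhds.2 fun i => ?_
  have hstrict := (hf.contDiffAt (x := x)).hasStrictFDerivAt one_ne_zero
  exact hstrict.tendsto_sub_div_of_sub_eq_smul
    ((tendsto_ite_nhds (· ≤ i) x).mono_left nhdsWithin_le_nhds)
    ((tendsto_ite_nhds (· < i) x).mono_left nhdsWithin_le_nhds)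
    (fun y => ite_le_sub_ite_lt x y i)
    (eventually_nhdsWithin_of_forall fun y hy => sub_ne_zero.2 (hy i).symm)
end

section
/- If f: ℝⁿ → ℝ is differentiable and the discrete gradient ∇_d f satisfies the discrete chain rule f(x) - f(y) = ⟪∇_d f(x,y), x - y⟫, then any sequence generated by x^{(k+1)} = x^{(k)} - h P ∇_d f(x^{(k+1)}, x^{(k)}) with h > 0 and P symmetric positive definite satisfies the discrete dissipation property f(x^{(k+1)}) ≤ f(x^{(k)}) for all k; more precisely, f(x^{(k+1)}) - f(x^{(k)}) = -h ⟪∇_d f(x^{(k+1)}, x^{(k)}), P ∇_d f(x^{(k+1)}, x^{(k)})⟫ ≤ 0. -/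
open Matrix

/-! The discrete chain rule turns the energy change of one step into `⟪g, x' - x⟫ = -h ⟪g, P g⟫`,
which is nonpositive because `P` is positive semidefinite and `h ≥ 0`. -/

variable {ι R : Type*} [Fintype ι]

theorem sub_eq_neg_mul_dotProduct_mulVec_of_chain_rule [CommRing R] {f : (ι → R) → R}
    {P : Matrix ι ι R} {g x y : ι → R} {h : R}
    (hchain : f x - f y = g ⬝ᵥ (x - y)) (hstep : x = y - h • P *ᵥ g) :
    f x - f y = -h * (g ⬝ᵥ P *ᵥ g) := by
  rw [hchain, hstep, sub_sub_cancel_left, dotProduct_neg, dotProduct_smul, smul_eq_mul, neg_mul]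

theorem neg_mul_dotProduct_mulVec_nonpos [CommRing R] [PartialOrder R] [IsOrderedRing R]
    [StarRing R] [TrivialStar R] {P : Matrix ι ι R} (hP : P.PosSemidef) {h : R} (hh : 0 ≤ h)
    (g : ι → R) : -h * (g ⬝ᵥ P *ᵥ g) ≤ 0 := by
  have hquad : 0 ≤ g ⬝ᵥ P *ᵥ g := by simpa only [star_trivial] using hP.dotProduct_mulVec_nonneg g
  rw [neg_mul, neg_nonpos]
  exact mul_nonneg hh hquad

theorem discrete_dissipation_general {n : ℕ} (f : (Fin n → ℝ) → ℝ)
    (dg : (Fin n → ℝ) → (Fin n → ℝ) → (Fin n → ℝ))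
    (hdg : ∀ x y : Fin n → ℝ, f x - f y = dg x y ⬝ᵥ (x - y))
    (P : Matrix (Fin n) (Fin n) ℝ) (hPpd : P.PosDef)
    (h : ℝ) (hh : 0 < h) (x : ℕ → Fin n → ℝ)
    (hx : ∀ k : ℕ, x (k + 1) = x k - h • P.mulVec (dg (x (k + 1)) (x k))) :
    ∀ k : ℕ,
      f (x (k + 1)) - f (x k) =
          -h * (dg (x (k + 1)) (x k) ⬝ᵥ P.mulVec (dg (x (k + 1)) (x k))) ∧
      f (x (k + 1)) ≤ f (x k) := by
  intro k
  have henergy := sub_eq_neg_mul_dotProduct_mulVec_of_chain_rule (hdg _ _) (hx k)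
  have hnonpos := neg_mul_dotProduct_mulVec_nonpos hPpd.posSemidef hh.le (dg (x (k + 1)) (x k))
  exact ⟨henergy, sub_nonpos.mp (henergy ▸ hnonpos)⟩

/-- Discrete dissipation property of the discrete gradient scheme
`x^{(k+1)} = x^{(k)} - h P ∇_d f(x^{(k+1)}, x^{(k)})`. -/
theorem discrete_dissipation {n : ℕ} (f : (Fin n → ℝ) → ℝ) (hf : Differentiable ℝ f)
    (dg : (Fin n → ℝ) → (Fin n → ℝ) → (Fin n → ℝ))
    (hdg : ∀ x y : Fin n → ℝ, f x - f y = dg x y ⬝ᵥ (x - y))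
    (P : Matrix (Fin n) (Fin n) ℝ) (hP : P.IsSymm) (hPpd : P.PosDef)
    (h : ℝ) (hh : 0 < h) (x : ℕ → Fin n → ℝ)
    (hx : ∀ k : ℕ, x (k + 1) = x k - h • P.mulVec (dg (x (k + 1)) (x k))) :
    ∀ k : ℕ,
      f (x (k + 1)) - f (x k) =
          -h * (dg (x (k + 1)) (x k) ⬝ᵥ P.mulVec (dg (x (k + 1)) (x k))) ∧
      f (x (k + 1)) ≤ f (x k) :=
  discrete_dissipation_general f dg hdg P hPpd h hh x hx
end

section
/- Let A = D + L + U be symmetric with D = diag(A) invertible, L strictly lower triangular, U = Lᵀ strictly upper triangular, b ∈ ℝⁿ, and f(x) = ½ xᵀAx - xᵀb. For ω ∈ (0,2) and h = 2ω/(2-ω), the SOR iterate x' = (D + ωL)⁻¹[((1-ω)D - ωU)x + ωb] satisfies the implicit discrete gradient equation x' = x - h D⁻¹ ∇_d f(x', x), where (∇_d f(x',x))ᵢ = Σ_{j<i} a_{ij} x'_j + a_{ii}(x'ᵢ + xᵢ)/2 + Σ_{j>i} a_{ij} x_j - bᵢ. -/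
/-!
Row `i` of the SOR system `(D + ωL) x' = ((1 - ω) D - ωU) x + ω b` reads `aᵢᵢ (x'ᵢ - xᵢ) + ω gᵢ = 0`,
where `gᵢ = Σ_{j<i} aᵢⱼ x'ⱼ + aᵢᵢ xᵢ + Σ_{j>i} aᵢⱼ xⱼ - bᵢ`. The discrete gradient component is
`gᵢ + aᵢᵢ (x'ᵢ - xᵢ) / 2`, so the row equation, rescaled by `2 / (2 - ω)`, is exactly the discrete
gradient step with `h = 2ω / (2 - ω)`.
-/

open Matrix Finset

namespace Matrix

variable {ι R : Type*} [DecidableEq ι] [CommRing R]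

theorem apply_eq_of_eq_diagonal_add_add_transpose {A L : Matrix ι ι R}
    (hA : A = diagonal (fun i => A i i) + L + Lᵀ) {i j : ι} (hij : i ≠ j) :
    A i j = L i j + L j i := by
  conv_lhs => rw [hA]
  simp [diagonal_apply_ne _ hij]

variable [LinearOrder ι] [Fintype ι] {A L : Matrix ι ι R}

theorem det_diagonal_add_smul_of_strictlyLower
    (hL : ∀ i j, i ≤ j → L i j = 0) (d : ι → R) (c : R) :
    (diagonal d + c • L).det = ∏ i, d i := by
  rw [det_of_isLowerTriangular]
  · simp [hL _ _ le_rfl]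
  · intro i j hij
    have hij : i < j := hij
    simp [diagonal_apply_ne _ hij.ne, hL i j hij.le]

theorem mulVec_apply_eq_sum_lt_of_eq_diagonal_add_add_transpose
    (hA : A = diagonal (fun i => A i i) + L + Lᵀ) (hL : ∀ i j, i ≤ j → L i j = 0)
    (v : ι → R) (i : ι) :
    (L *ᵥ v) i = ∑ j ∈ univ.filter (· < i), A i j * v j := by
  rw [sum_filter, mulVec, dotProduct]
  refine sum_congr rfl fun j _ => ?_
  split_ifs with hji
  · rw [apply_eq_of_eq_diagonal_add_add_transpose hA hji.ne', hL j i hji.le, add_zero]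
  · rw [hL i j (not_lt.mp hji), zero_mul]

theorem transpose_mulVec_apply_eq_sum_gt_of_eq_diagonal_add_add_transpose
    (hA : A = diagonal (fun i => A i i) + L + Lᵀ) (hL : ∀ i j, i ≤ j → L i j = 0)
    (v : ι → R) (i : ι) :
    (Lᵀ *ᵥ v) i = ∑ j ∈ univ.filter (i < ·), A i j * v j := by
  rw [sum_filter, mulVec, dotProduct]
  refine sum_congr rfl fun j _ => ?_
  split_ifs with hij
  · rw [apply_eq_of_eq_diagonal_add_add_transpose hA hij.ne, hL i j hij.le, zero_add,
      transpose_apply]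
  · rw [transpose_apply, hL j i (not_lt.mp hij), zero_mul]

end Matrix

theorem discrete_gradient_step_of_sor_row {K : Type*} [Field K] [CharZero K]
    {ω a x x' sl su b : K} (ha : a ≠ 0) (hω : ω ≠ 2)
    (hrow : a * x' + ω * sl = (1 - ω) * (a * x) - ω * su + ω * b) :
    x' = x - 2 * ω / (2 - ω) * a⁻¹ * (sl + a * (x' + x) / 2 + su - b) := by
  have h2ω : 2 - ω ≠ 0 := sub_ne_zero.mpr hω.symm
  field_simp
  linear_combination 2 * hrow

/-- One SOR step coincides with the implicit Itoh–Abe discrete gradient step for the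
quadratic `f x = ½ xᵀAx - xᵀb` with `P = D⁻¹` and `h = 2ω/(2-ω)`. -/
theorem sor_eq_discrete_gradient_step {n : ℕ}
    (A D L : Matrix (Fin n) (Fin n) ℝ)
    (hD : D = Matrix.diagonal (fun i => A i i))
    (hdiag : ∀ i, 0 < A i i)
    (hL : ∀ i j : Fin n, i ≤ j → L i j = 0)
    (hA : A = D + L + Lᵀ)
    (b : Fin n → ℝ) (ω : ℝ) (hω : ω ∈ Set.Ioo (0 : ℝ) 2)
    (x x' : Fin n → ℝ)
    (hx' : x' = (D + ω • L)⁻¹.mulVec ((((1 - ω) • D - ω • Lᵀ).mulVec x) + ω • b)) :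
    ∀ i : Fin n,
      x' i = x i - (2 * ω / (2 - ω)) * (A i i)⁻¹ *
        ((∑ j ∈ Finset.univ.filter (fun j => j < i), A i j * x' j) +
          A i i * (x' i + x i) / 2 +
          (∑ j ∈ Finset.univ.filter (fun j => i < j), A i j * x j) - b i) := by
  subst hD
  have hdet : IsUnit (diagonal (fun i => A i i) + ω • L).det := by
    rw [det_diagonal_add_smul_of_strictlyLower hL]
    exact (prod_pos fun i _ => hdiag i).ne'.isUnit
  have hsys : (diagonal (fun i => A i i) + ω • L) *ᵥ x' =
      ((1 - ω) • diagonal (fun i => A i i) - ω • Lᵀ) *ᵥ x + ω • b := by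
    rw [hx', mulVec_mulVec, mul_nonsing_inv _ hdet, one_mulVec]
  intro i
  have hrow := congrFun hsys i
  simp only [add_mulVec, sub_mulVec, smul_mulVec, Pi.add_apply, Pi.sub_apply, Pi.smul_apply,
    smul_eq_mul, mulVec_diagonal, mulVec_apply_eq_sum_lt_of_eq_diagonal_add_add_transpose hA hL,
    transpose_mulVec_apply_eq_sum_gt_of_eq_diagonal_add_add_transpose hA hL] at hrow
  exact discrete_gradient_step_of_sor_row (hdiag i).ne' hω.2.ne hrow
end

section
/- For A symmetric positive definite with A = D + L + Lᵀ (D diagonal), ω ∈ (0,2), and h = 2ω/(2-ω), one SOR step starting at x strictly decreases f(x) = ½ xᵀAx - xᵀb unless x = A⁻¹b; i.e., f(G_ω x + c_ω) ≤ f(x), with equality iff Ax = b. -/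
/-! With `d = x' - x` and residual `r = Ax - b`, the SOR update reads `(D + ωL) d = -ω r`.
Pairing with `d` gives `ω dᵀr = -(dᵀDd + ω dᵀLd)`, while `dᵀAd = dᵀDd + 2 dᵀLd` by symmetry;
hence `f x' - f x = dᵀr + ½ dᵀAd = (1/2 - 1/ω) dᵀDd`. For `0 < ω < 2` the factor is negative
and `D` is positive definite, so the change is `≤ 0`, with equality iff `d = 0`, i.e. iff `r = 0`,
as `D + ωL` is triangular with positive diagonal. -/

open Matrix

namespace Matrix

variable {ι K : Type*} [Fintype ι]

theorem det_diagonal_add_of_strictLower [LinearOrder ι] [CommRing K] {w : ι → K}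
    {L : Matrix ι ι K} (hL : ∀ i j, i ≤ j → L i j = 0) : (diagonal w + L).det = ∏ i, w i := by
  classical
  have hlower : (diagonal w + L).IsLowerTriangular :=
    (blockTriangular_diagonal w).add fun i j hij => hL i j hij.le
  rw [det_of_isLowerTriangular _ hlower]
  simp [hL _ _ le_rfl]

theorem dotProduct_transpose_mulVec_self [CommSemiring K] (L : Matrix ι ι K) (d : ι → K) :
    d ⬝ᵥ Lᵀ *ᵥ d = d ⬝ᵥ L *ᵥ d := by
  rw [dotProduct_mulVec, vecMul_transpose, dotProduct_comm]

theorem IsSymm.dotProduct_mulVec_comm [CommSemiring K] {A : Matrix ι ι K} (hA : A.IsSymm)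
    (x y : ι → K) : x ⬝ᵥ A *ᵥ y = y ⬝ᵥ A *ᵥ x := by
  conv_lhs => rw [← hA.eq]
  exact dotProduct_transpose_mulVec ..

theorem IsSymm.quadratic_add [Field K] [CharZero K] {A : Matrix ι ι K} (hA : A.IsSymm)
    (b x d : ι → K) :
    (1 / 2) * ((x + d) ⬝ᵥ A *ᵥ (x + d)) - (x + d) ⬝ᵥ b =
      (1 / 2) * (x ⬝ᵥ A *ᵥ x) - x ⬝ᵥ b + d ⬝ᵥ (A *ᵥ x - b) + (1 / 2) * (d ⬝ᵥ A *ᵥ d) := by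
  simp only [mulVec_add, dotProduct_add, add_dotProduct, dotProduct_sub,
    hA.dotProduct_mulVec_comm x d]
  ring

end Matrix

section SOR

variable {ι K : Type*} [Fintype ι]

theorem sor_step_mulVec_sub [DecidableEq ι] [CommRing K] {A D L : Matrix ι ι K}
    (hA : A = D + L + Lᵀ) {ω : K} (hM : IsUnit (D + ω • L).det) (b x : ι → K) :
    (D + ω • L) *ᵥ ((D + ω • L)⁻¹ *ᵥ (((1 - ω) • D - ω • Lᵀ) *ᵥ x + ω • b) - x) =
      -(ω • (A *ᵥ x - b)) := by
  rw [mulVec_sub, mulVec_mulVec, mul_nonsing_inv _ hM, one_mulVec, hA]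
  simp only [add_mulVec, sub_mulVec, smul_mulVec, sub_smul, one_smul, smul_add, smul_sub]
  abel

theorem sor_energy_change [Field K] [CharZero K] {A D L : Matrix ι ι K} (hAsymm : A.IsSymm)
    (hA : A = D + L + Lᵀ) {ω : K} (hω : ω ≠ 0) {b x d : ι → K}
    (hd : (D + ω • L) *ᵥ d = -(ω • (A *ᵥ x - b))) :
    (1 / 2) * ((x + d) ⬝ᵥ A *ᵥ (x + d)) - (x + d) ⬝ᵥ b - ((1 / 2) * (x ⬝ᵥ A *ᵥ x) - x ⬝ᵥ b) =
      (1 / 2 - 1 / ω) * (d ⬝ᵥ D *ᵥ d) := by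
  have hres : ω * (d ⬝ᵥ (A *ᵥ x - b)) = -(d ⬝ᵥ D *ᵥ d + ω * (d ⬝ᵥ L *ᵥ d)) := by
    have := congrArg (d ⬝ᵥ ·) hd
    simp only [add_mulVec, smul_mulVec, dotProduct_add, dotProduct_smul, dotProduct_neg,
      smul_eq_mul] at this
    linear_combination this
  have hquad : d ⬝ᵥ A *ᵥ d = d ⬝ᵥ D *ᵥ d + 2 * (d ⬝ᵥ L *ᵥ d) := by
    rw [hA, add_mulVec, add_mulVec, dotProduct_add, dotProduct_add,
      dotProduct_transpose_mulVec_self]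
    ring
  rw [hAsymm.quadratic_add, hquad]
  field_simp
  linear_combination 2 * hres

end SOR

/-- One SOR step does not increase `f x = ½ xᵀAx - xᵀb`, with equality iff `Ax = b`. -/
theorem sor_step_decreases {n : ℕ}
    (A D L : Matrix (Fin n) (Fin n) ℝ)
    (hApd : A.PosDef)
    (hD : D = Matrix.diagonal (fun i => A i i))
    (hL : ∀ i j : Fin n, i ≤ j → L i j = 0)
    (hA : A = D + L + Lᵀ)
    (b : Fin n → ℝ) (ω : ℝ) (hω : ω ∈ Set.Ioo (0 : ℝ) 2)
    (f : (Fin n → ℝ) → ℝ)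
    (hfdef : f = fun x => (1 / 2) * (x ⬝ᵥ A.mulVec x) - x ⬝ᵥ b)
    (x x' : Fin n → ℝ)
    (hx' : x' = (D + ω • L)⁻¹.mulVec ((((1 - ω) • D - ω • Lᵀ).mulVec x) + ω • b)) :
    f x' ≤ f x ∧ (f x' = f x ↔ A.mulVec x = b) := by
  obtain ⟨hω0, hω2⟩ := hω
  have hDpd : D.PosDef := hD ▸ posDef_diagonal_iff.2 fun i => hApd.diag_pos
  have hM : IsUnit (D + ω • L).det := by
    rw [hD, det_diagonal_add_of_strictLower fun i j hij => by simp [hL i j hij]]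
    exact (Finset.prod_pos fun i _ => hApd.diag_pos).ne'.isUnit
  have hstep : (D + ω • L) *ᵥ (x' - x) = -(ω • (A *ᵥ x - b)) := by
    rw [hx']
    exact sor_step_mulVec_sub hA hM b x
  set d := x' - x with hd
  have hchange : f x' - f x = (1 / 2 - 1 / ω) * (d ⬝ᵥ D *ᵥ d) := by
    rw [show x' = x + d by rw [hd]; abel, hfdef]
    exact sor_energy_change (isHermitian_iff_isSymm.1 hApd.isHermitian) hA hω0.ne' hstep
  have hcoef : 1 / 2 - 1 / ω < 0 := by
    linarith [one_div_lt_one_div_of_lt hω0 hω2]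
  have hq_nonneg : 0 ≤ d ⬝ᵥ D *ᵥ d := by
    simpa using hDpd.posSemidef.dotProduct_mulVec_nonneg d
  have hq_zero : d ⬝ᵥ D *ᵥ d = 0 ↔ d = 0 :=
    ⟨fun hq => by_contra fun hd0 => by simpa [hq] using hDpd.dotProduct_mulVec_pos hd0,
      fun hd0 => by simp [hd0]⟩
  have hM_inj : Function.Injective (D + ω • L).mulVec :=
    mulVec_injective_iff_isUnit.2 ((isUnit_iff_isUnit_det _).2 hM)
  have hd_zero : d = 0 ↔ A *ᵥ x = b :=
    calc d = 0 ↔ (D + ω • L) *ᵥ d = 0 := (hM_inj.eq_iff' (mulVec_zero _)).symm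
      _ ↔ A *ᵥ x - b = 0 := by rw [hstep, neg_eq_zero, smul_eq_zero_iff_right hω0.ne']
      _ ↔ A *ᵥ x = b := sub_eq_zero
  constructor
  · rw [← sub_nonpos, hchange]
    exact mul_nonpos_of_nonpos_of_nonneg hcoef.le hq_nonneg
  · rw [← sub_eq_zero, hchange, mul_eq_zero, or_iff_right hcoef.ne, hq_zero, hd_zero]
end

section
/- For A symmetric positive definite and f(x) = ½ xᵀAx - xᵀb, every iterate x' = x - h D⁻¹ ∇_d f(x', x) of the discrete gradient scheme with fixed h > 0 and D = diag(A) is uniquely defined: the implicit equation has a unique solution x' for each x, given explicitly by the SOR update with ω = 2h/(2+h). -/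
/-!
The `i`-th equation of the Itoh–Abe step is linear in `x'` and involves only the `x'ⱼ` with
`j ≤ i`. Multiplying it by `2 aᵢᵢ / (2 + h)` turns the system into the SOR equation
`(D + ωL) x' = ((1 - ω) D - ω Lᵀ) x + ω b` with `ω = 2h/(2+h)`. Since `D + ωL` is lower
triangular with the positive diagonal of `A`, it is invertible, so the step has exactly one
solution, the SOR update.
-/

open Matrix Finset

namespace Matrix

variable {ι : Type*} [Fintype ι] [DecidableEq ι]

section Inverse

variable {K : Type*} [Field K] {M : Matrix ι ι K}

lemma mulVec_nonsing_inv_mulVec (hM : IsUnit M.det) (v : ι → K) :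
    M *ᵥ (M⁻¹ *ᵥ v) = v := by
  rw [mulVec_mulVec, mul_nonsing_inv M hM, one_mulVec]

lemma existsUnique_mulVec_eq (hM : IsUnit M.det) (v : ι → K) : ∃! y, M *ᵥ y = v :=
  ⟨M⁻¹ *ᵥ v, mulVec_nonsing_inv_mulVec hM v, fun y hy => by
    rw [← hy, mulVec_mulVec, nonsing_inv_mul M hM, one_mulVec]⟩

end Inverse

variable [LinearOrder ι]

section Splitting

variable {R : Type*} [CommRing R] {A L : Matrix ι ι R} {d : ι → R}

lemma mulVec_apply_eq_sum_lt_of_eq_diagonal_add (hL : ∀ i j, i ≤ j → L i j = 0)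
    (hA : A = diagonal d + L + Lᵀ) (y : ι → R) (i : ι) :
    (L *ᵥ y) i = ∑ j ∈ univ.filter (· < i), A i j * y j := by
  rw [mulVec, dotProduct, sum_filter]
  refine sum_congr rfl fun j _ => ?_
  split_ifs with hji
  · simp [hA, diagonal_apply_ne _ hji.ne', hL j i hji.le]
  · rw [hL i j (not_lt.1 hji), zero_mul]

lemma transpose_mulVec_apply_eq_sum_gt_of_eq_diagonal_add (hL : ∀ i j, i ≤ j → L i j = 0)
    (hA : A = diagonal d + L + Lᵀ) (y : ι → R) (i : ι) :
    (Lᵀ *ᵥ y) i = ∑ j ∈ univ.filter (i < ·), A i j * y j := by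
  rw [mulVec, dotProduct, sum_filter]
  refine sum_congr rfl fun j _ => ?_
  split_ifs with hij
  · simp [hA, diagonal_apply_ne _ hij.ne, hL i j hij.le]
  · rw [transpose_apply, hL j i (not_lt.1 hij), zero_mul]

end Splitting

lemma isUnit_det_diagonal_add_smul {K : Type*} [Field K] {d : ι → K} (hd : ∀ i, d i ≠ 0)
    {L : Matrix ι ι K} (hL : ∀ i j, i ≤ j → L i j = 0) (ω : K) :
    IsUnit (diagonal d + ω • L).det := by
  have hlower : (diagonal d + ω • L).IsLowerTriangular :=
    (blockTriangular_diagonal d).add fun i j hij => by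
      simp [hL i j (OrderDual.toDual_lt_toDual.1 hij).le]
  rw [det_of_isLowerTriangular _ hlower]
  exact isUnit_iff_ne_zero.2 <| prod_ne_zero_iff.2 fun i _ => by simpa [hL i i le_rfl] using hd i

end Matrix

lemma discrete_gradient_row_iff {K : Type*} [Field K] [CharZero K] {a h ω x y s t c : K}
    (ha : a ≠ 0) (hh : 2 + h ≠ 0) (hω : ω = 2 * h / (2 + h)) :
    y = x - h * a⁻¹ * (s + a * (y + x) / 2 + t - c) ↔
      a * y + ω * s = (1 - ω) * (a * x) - ω * t + ω * c := by
  subst hω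
  field_simp
  constructor <;> intro H <;> linear_combination H

lemma discrete_gradient_step_iff_sor {ι : Type*} [Fintype ι] [LinearOrder ι] [DecidableEq ι]
    {K : Type*} [Field K] [CharZero K] {A L : Matrix ι ι K} (hdiag : ∀ i, A i i ≠ 0)
    (hL : ∀ i j, i ≤ j → L i j = 0) (hA : A = diagonal (fun i => A i i) + L + Lᵀ)
    (b : ι → K) {h ω : K} (hh : 2 + h ≠ 0) (hω : ω = 2 * h / (2 + h)) (x y : ι → K) :
    (∀ i, y i = x i - h * (A i i)⁻¹ *
        ((∑ j ∈ univ.filter (· < i), A i j * y j) + A i i * (y i + x i) / 2 +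
          (∑ j ∈ univ.filter (i < ·), A i j * x j) - b i)) ↔
      (diagonal (fun i => A i i) + ω • L) *ᵥ y =
        ((1 - ω) • diagonal (fun i => A i i) - ω • Lᵀ) *ᵥ x + ω • b := by
  rw [funext_iff]
  refine forall_congr' fun i => ?_
  simp only [add_mulVec, sub_mulVec, smul_mulVec, mulVec_diagonal, Pi.add_apply, Pi.sub_apply,
    Pi.smul_apply, smul_eq_mul, mulVec_apply_eq_sum_lt_of_eq_diagonal_add hL hA,
    transpose_mulVec_apply_eq_sum_gt_of_eq_diagonal_add hL hA]
  exact discrete_gradient_row_iff (hdiag i) hh hω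

/-- The implicit discrete gradient equation `x' = x - h D⁻¹ ∇_d f(x', x)` for the
quadratic `f x = ½ xᵀAx - xᵀb` has a unique solution `x'` for each `x`, given
explicitly by the SOR update with `ω = 2h/(2+h)`. -/
theorem discrete_gradient_step_unique {n : ℕ}
    (A D L : Matrix (Fin n) (Fin n) ℝ)
    (hApd : A.PosDef)
    (hD : D = Matrix.diagonal (fun i => A i i))
    (hL : ∀ i j : Fin n, i ≤ j → L i j = 0)
    (hA : A = D + L + Lᵀ)
    (b : Fin n → ℝ) (h : ℝ) (hh : 0 < h) (ω : ℝ) (hω : ω = 2 * h / (2 + h))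
    (x : Fin n → ℝ) :
    (∃! x' : Fin n → ℝ,
       ∀ i : Fin n,
         x' i = x i - h * (A i i)⁻¹ *
           ((∑ j ∈ Finset.univ.filter (fun j => j < i), A i j * x' j) +
             A i i * (x' i + x i) / 2 +
             (∑ j ∈ Finset.univ.filter (fun j => i < j), A i j * x j) - b i)) ∧
    (∀ i : Fin n,
       ((D + ω • L)⁻¹.mulVec ((((1 - ω) • D - ω • Lᵀ).mulVec x) + ω • b)) i =
         x i - h * (A i i)⁻¹ *
           ((∑ j ∈ Finset.univ.filter (fun j => j < i),
               A i j * ((D + ω • L)⁻¹.mulVec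
                 ((((1 - ω) • D - ω • Lᵀ).mulVec x) + ω • b)) j) +
             A i i * (((D + ω • L)⁻¹.mulVec
                 ((((1 - ω) • D - ω • Lᵀ).mulVec x) + ω • b)) i + x i) / 2 +
             (∑ j ∈ Finset.univ.filter (fun j => i < j), A i j * x j) - b i)) := by
  subst hD
  have hdiag : ∀ i, A i i ≠ 0 := fun i => hApd.diag_pos.ne'
  have hstep := discrete_gradient_step_iff_sor hdiag hL hA b (by positivity) hω x
  have hM := isUnit_det_diagonal_add_smul hdiag hL ω
  exact ⟨(existsUnique_congr hstep).2 (existsUnique_mulVec_eq hM _),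
    (hstep _).2 (mulVec_nonsing_inv_mulVec hM _)⟩
end
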